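/- Polynomial structure of the eigenvalue recurrence solutions: for each n ≥ 1 there exists a real polynomial P_n ∈ ℝ[X] of degree exactly n − 1 whose coefficient of X^k vanishes whenever k and n − 1 have different parity, such that for every ω ∈ ℝ the unique solution φ^ω : ℕ → ℂ of the eigenvalue recurrence for ω with initial data φ^ω 0 = 0 and φ^ω 1 = 1 satisfies φ^ω n = (Complex.I)^(n−1) · P_n.eval ω. In particular, for every ω ∈ ℝ the number i^(1−n)·φ^ω n is real, and ω ↦ φ^ω n is a polynomial of degree n − 1 in ω. -/

import Mathlib

/-!
Writing `φ n = i ^ (n - 1) * p n`, the complex recurrence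
`ω φ m = i a_m φ (m + 1) - i b_m φ (m - 1)` becomes the real three-term recurrence
`-a_m p (m + 1) = ω p m + b_m p (m - 1)` with `p 0 = 0`, `p 1 = 1`. Read with `ω` as the
variable, it produces polynomials: each step multiplies the top-degree term by `ω` and a nonzero
constant, so the degree goes up by one, and it adds `X` times a polynomial of one parity to a
polynomial of the opposite parity, so each `p n` has only monomials of the parity of `n - 1`.
-/

open Polynomial

section ThreeTermRecurrence

variable (a b : ℕ → ℝ)

noncomputable def recurrencePoly : ℕ → ℝ[X]
  | 0 => 0
  | 1 => 1
  | m + 2 => C (-(a (m + 1))⁻¹) * (X * recurrencePoly (m + 1) + C (b (m + 1)) * recurrencePoly m)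

variable {a b}

theorem degree_recurrencePoly_add_two {m : ℕ} (ha : a (m + 1) ≠ 0)
    (h : (recurrencePoly a b m).degree < (recurrencePoly a b (m + 1)).degree + 1) :
    (recurrencePoly a b (m + 2)).degree = (recurrencePoly a b (m + 1)).degree + 1 := by
  have h_lower : (C (b (m + 1)) * recurrencePoly a b m).degree <
      (X * recurrencePoly a b (m + 1)).degree := by
    rw [X_mul, degree_mul_X, ← smul_eq_C_mul]
    exact (degree_smul_le _ _).trans_lt h
  rw [recurrencePoly, degree_C_mul (neg_ne_zero.2 (inv_ne_zero ha)),
    degree_add_eq_left_of_degree_lt h_lower, X_mul, degree_mul_X]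

theorem degree_recurrencePoly_succ (ha : ∀ m, a (m + 1) ≠ 0) (n : ℕ) :
    (recurrencePoly a b (n + 1)).degree = n := by
  induction n using Nat.twoStepInduction with
  | zero => simp [recurrencePoly]
  | one =>
    rw [degree_recurrencePoly_add_two (ha 0)] <;> simp [recurrencePoly]
  | more n ih₀ ih₁ =>
    rw [degree_recurrencePoly_add_two (ha _), ih₁]
    · norm_cast
    · rw [ih₀, ih₁]
      norm_cast
      omega

theorem coeff_recurrencePoly_eq_zero_of_mod_two_eq {n k : ℕ} (h : k % 2 = n % 2) :
    (recurrencePoly a b n).coeff k = 0 := by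
  induction n using recurrencePoly.induct generalizing k with
  | case1 => simp [recurrencePoly]
  | case2 => simp [recurrencePoly, coeff_one]; omega
  | case3 m ih₁ ih₀ =>
    have h_shift : (X * recurrencePoly a b (m + 1)).coeff k = 0 := by
      rcases k with _ | k
      · simp
      · rw [coeff_X_mul]
        exact ih₁ (by omega)
    rw [recurrencePoly, coeff_C_mul, coeff_add, h_shift, coeff_C_mul, ih₀ (by omega)]
    simp

/-- Stated for `i * φ n` so that the exponent `n` needs no truncated subtraction. -/
theorem I_mul_eq_I_pow_mul_eval_recurrencePoly (ha : ∀ m, a (m + 1) ≠ 0) {ω : ℝ} {φ : ℕ → ℂ}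
    (h₀ : φ 0 = 0) (h₁ : φ 1 = 1)
    (hφ : ∀ m, 1 ≤ m → (ω : ℂ) * φ m =
      Complex.I * a m * φ (m + 1) - Complex.I * b m * φ (m - 1)) (n : ℕ) :
    Complex.I * φ n = Complex.I ^ n * (((recurrencePoly a b n).eval ω : ℝ) : ℂ) := by
  induction n using recurrencePoly.induct with
  | case1 => simp [h₀, recurrencePoly]
  | case2 => simp [h₁, recurrencePoly]
  | case3 m ih₁ ih₀ =>
    show Complex.I * φ (m + 2) =
      Complex.I ^ (m + 2) * (((recurrencePoly a b (m + 2)).eval ω : ℝ) : ℂ)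
    have hrec := hφ (m + 1) (by omega)
    rw [Nat.add_sub_cancel] at hrec
    have heval : (recurrencePoly a b (m + 2)).eval ω * a (m + 1) =
        -(ω * (recurrencePoly a b (m + 1)).eval ω + b (m + 1) * (recurrencePoly a b m).eval ω) := by
      have := ha m
      simp only [recurrencePoly, eval_mul, eval_C, eval_add, eval_X]
      field_simp
    have heval' := congrArg ((↑) : ℝ → ℂ) heval
    push_cast at heval'
    refine mul_left_cancel₀ (Complex.ofReal_ne_zero.2 (ha m)) ?_
    -- `i` times the recurrence at `m + 1`, with `i ^ 2 = -1` absorbing the sign of `heval'`.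
    linear_combination (-1) * hrec + b (m + 1) * ih₀ + (-Complex.I * ω) * ih₁ +
      (-Complex.I ^ (m + 2)) * heval' +
      (ω * φ (m + 1) + b (m + 1) * Complex.I ^ m * ((recurrencePoly a b m).eval ω : ℝ)) *
        Complex.I_sq

end ThreeTermRecurrence

theorem eigenfunction_polynomial_structure (n : ℕ) (hn : 1 ≤ n) :
    ∃ P : Polynomial ℝ,
      P.degree = (n - 1 : ℕ) ∧
      (∀ k : ℕ, k % 2 ≠ (n - 1) % 2 → P.coeff k = 0) ∧
      ∀ (ω : ℝ) (φ : ℕ → ℂ), φ 0 = 0 → φ 1 = 1 →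
        (∀ m : ℕ, 1 ≤ m →
          (ω : ℂ) * φ m =
            Complex.I * ((m : ℂ) / 2 + 3 / 4) * φ (m + 1) -
              Complex.I * ((m : ℂ) / 2 + 1 / 4) * φ (m - 1)) →
        φ n = Complex.I ^ (n - 1) * ((P.eval ω : ℝ) : ℂ) := by
  obtain ⟨m, rfl⟩ := Nat.exists_eq_add_of_le' hn
  set a : ℕ → ℝ := fun m => m / 2 + 3 / 4
  set b : ℕ → ℝ := fun m => m / 2 + 1 / 4
  have ha : ∀ m, a (m + 1) ≠ 0 := fun m => by positivity
  refine ⟨recurrencePoly a b (m + 1), degree_recurrencePoly_succ ha m,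
    fun k hk => coeff_recurrencePoly_eq_zero_of_mod_two_eq (by omega), ?_⟩
  intro ω φ h₀ h₁ hφ
  have hI := I_mul_eq_I_pow_mul_eval_recurrencePoly (b := b) (ω := ω) ha h₀ h₁
    (fun m hm => by simpa [a, b] using hφ m hm) (m + 1)
  rw [pow_succ', mul_assoc] at hI
  simpa using mul_left_cancel₀ Complex.I_ne_zero hI
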